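/- If u, w ∈ S_n are joined by a decreasing path γ in the extended k-Bruhat order, then the length of γ equals #([k] ∩ M(u⁻¹w)), the number of indices i ≤ k with u(i) ≠ w(i). If instead γ is an increasing path from u to w, then its length equals #({k+1,...,n} ∩ M(u⁻¹w)). -/

import Mathlib

/-- `IsKPath k u l` : starting from `u`, the list of position pairs `l`
describes a path of `k`-edges in the Bruhat graph of `S_n`. -/
def IsKPath {n : ℕ} (k : ℕ) : Equiv.Perm (Fin n) → List (Fin n × Fin n) → Prop
  | _, [] => True
  | u, p :: l => p.1.val < k ∧ k ≤ p.2.val ∧ u p.1 < u p.2 ∧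
      IsKPath k (u * Equiv.swap p.1 p.2) l

/-- The labels `τ_i = w_{i-1}(a_i)` of the edges of a path. -/
def pathLabels {n : ℕ} : Equiv.Perm (Fin n) → List (Fin n × Fin n) → List (Fin n)
  | _, [] => []
  | u, p :: l => u p.1 :: pathLabels (u * Equiv.swap p.1 p.2) l

/-- The endpoint `u · t_{a₁b₁} ⋯ t_{a_m b_m}` of a path starting at `u`. -/
def pathEnd {n : ℕ} (u : Equiv.Perm (Fin n)) (l : List (Fin n × Fin n)) : Equiv.Perm (Fin n) :=
  u * (l.map fun p => Equiv.swap p.1 p.2).prod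

/-
Along a `k`-edge `u → u t_{ab}` (with `a < k ≤ b` and `u a < u b`) the value in a position
`i < k` can only go up, strictly when `i = a`, and the value in a position `i ≥ k` can only go
down, strictly when `i = b`. Hence, along any `k`-path, a position `i < k` ends with a new value
iff it occurs as some `a_j`, and a position `i ≥ k` iff it occurs as some `b_j`. It remains to
see that these positions are never repeated. On a decreasing path, the label of a later edge
through `a_j` is the value at `a_j` at that time, which exceeds `τ_j = u_{j-1}(a_j)`; on an
increasing path, the value at `b_j` right after step `j` is `τ_j`, and a later edge through
`b_j` would put down a label below it.
-/

open Equiv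

@[simp]
lemma pathEnd_nil {n : ℕ} (u : Perm (Fin n)) : pathEnd u [] = u := by
  simp [pathEnd]

@[simp]
lemma pathEnd_cons {n : ℕ} (u : Perm (Fin n)) (p : Fin n × Fin n) (l : List (Fin n × Fin n)) :
    pathEnd u (p :: l) = pathEnd (u * swap p.1 p.2) l := by
  simp [pathEnd, mul_assoc]

lemma pathEnd_apply_of_forall_ne {n : ℕ} (u : Perm (Fin n)) {l : List (Fin n × Fin n)}
    {i : Fin n} (h : ∀ p ∈ l, i ≠ p.1 ∧ i ≠ p.2) : pathEnd u l i = u i := by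
  induction l generalizing u with
  | nil => simp
  | cons q l ih =>
    obtain ⟨hi1, hi2⟩ := h q List.mem_cons_self
    rw [pathEnd_cons, ih _ fun p hp => h p (List.mem_cons_of_mem _ hp)]
    simp [swap_apply_of_ne_of_ne hi1 hi2]

section

variable {n k : ℕ} {u : Perm (Fin n)} {a b i : Fin n}

lemma apply_le_mul_swap_apply (hb : k ≤ b.val) (hab : u a < u b) (hi : i.val < k) :
    u i ≤ (u * swap a b) i := by
  have hib : i ≠ b := fun h => by subst h; omega
  by_cases hia : i = a
  · subst hia; simpa using hab.le
  · simp [swap_apply_of_ne_of_ne hia hib]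

lemma mul_swap_apply_le_apply (ha : a.val < k) (hab : u a < u b) (hi : k ≤ i.val) :
    (u * swap a b) i ≤ u i := by
  have hia : i ≠ a := fun h => by subst h; omega
  by_cases hib : i = b
  · subst hib; simpa using hab.le
  · simp [swap_apply_of_ne_of_ne hia hib]

end

namespace IsKPath

variable {n k : ℕ} {u : Perm (Fin n)} {i : Fin n} {l : List (Fin n × Fin n)}

lemma fst_lt (h : IsKPath k u l) : ∀ p ∈ l, p.1.val < k := by
  induction l generalizing u with
  | nil => simp
  | cons q l ih =>
    obtain ⟨hq, -, -, h⟩ := h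
    simpa [hq] using ih h

lemma le_snd (h : IsKPath k u l) : ∀ p ∈ l, k ≤ p.2.val := by
  induction l generalizing u with
  | nil => simp
  | cons q l ih =>
    obtain ⟨-, hq, -, h⟩ := h
    simpa [hq] using ih h

lemma apply_le_pathEnd_apply (h : IsKPath k u l) (hi : i.val < k) : u i ≤ pathEnd u l i := by
  induction l generalizing u with
  | nil => simp
  | cons q l ih =>
    obtain ⟨-, hb, hab, h⟩ := h
    simpa using (apply_le_mul_swap_apply hb hab hi).trans (ih h)

lemma pathEnd_apply_le_apply (h : IsKPath k u l) (hi : k ≤ i.val) : pathEnd u l i ≤ u i := by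
  induction l generalizing u with
  | nil => simp
  | cons q l ih =>
    obtain ⟨ha, -, hab, h⟩ := h
    simpa using (ih h).trans (mul_swap_apply_le_apply ha hab hi)

lemma apply_lt_pathEnd_apply (h : IsKPath k u l) (hi : i.val < k) (hmem : i ∈ l.map Prod.fst) :
    u i < pathEnd u l i := by
  induction l generalizing u with
  | nil => simp at hmem
  | cons q l ih =>
    obtain ⟨-, hb, hab, h⟩ := h
    rw [pathEnd_cons]
    rcases List.mem_cons.1 hmem with hia | hmem
    · subst hia
      exact (by simpa using hab : u q.1 < (u * swap q.1 q.2) q.1).trans_le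
        (h.apply_le_pathEnd_apply hi)
    · exact (apply_le_mul_swap_apply hb hab hi).trans_lt (ih h hmem)

lemma pathEnd_apply_lt_apply (h : IsKPath k u l) (hi : k ≤ i.val) (hmem : i ∈ l.map Prod.snd) :
    pathEnd u l i < u i := by
  induction l generalizing u with
  | nil => simp at hmem
  | cons q l ih =>
    obtain ⟨ha, -, hab, h⟩ := h
    rw [pathEnd_cons]
    rcases List.mem_cons.1 hmem with hib | hmem
    · subst hib
      exact (h.pathEnd_apply_le_apply hi).trans_lt (by simpa using hab)
    · exact (ih h hmem).trans_le (mul_swap_apply_le_apply ha hab hi)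

lemma exists_label_ge (h : IsKPath k u l) (hi : i.val < k) (hmem : i ∈ l.map Prod.fst) :
    ∃ τ ∈ pathLabels u l, u i ≤ τ := by
  induction l generalizing u with
  | nil => simp at hmem
  | cons q l ih =>
    obtain ⟨-, hb, hab, h⟩ := h
    rcases List.mem_cons.1 hmem with hia | hmem
    · exact ⟨u q.1, List.mem_cons_self, hia ▸ le_rfl⟩
    · obtain ⟨τ, hτ, hle⟩ := ih h hmem
      exact ⟨τ, List.mem_cons_of_mem _ hτ, (apply_le_mul_swap_apply hb hab hi).trans hle⟩

lemma exists_label_lt (h : IsKPath k u l) (hi : k ≤ i.val) (hmem : i ∈ l.map Prod.snd) :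
    ∃ τ ∈ pathLabels u l, τ < u i := by
  induction l generalizing u with
  | nil => simp at hmem
  | cons q l ih =>
    obtain ⟨ha, -, hab, h⟩ := h
    rcases List.mem_cons.1 hmem with hib | hmem
    · exact ⟨u q.1, List.mem_cons_self, hib ▸ hab⟩
    · obtain ⟨τ, hτ, hlt⟩ := ih h hmem
      exact ⟨τ, List.mem_cons_of_mem _ hτ, hlt.trans_le (mul_swap_apply_le_apply ha hab hi)⟩

lemma nodup_map_fst (h : IsKPath k u l) (hc : (pathLabels u l).IsChain (· > ·)) :
    (l.map Prod.fst).Nodup := by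
  induction l generalizing u with
  | nil => simp
  | cons q l ih =>
    obtain ⟨ha, -, hab, h⟩ := h
    have hlt : ∀ τ ∈ pathLabels (u * swap q.1 q.2) l, τ < u q.1 :=
      (List.pairwise_cons.1 (List.isChain_iff_pairwise.1 hc)).1
    refine List.nodup_cons.2 ⟨fun hmem => ?_, ih h hc.tail⟩
    obtain ⟨τ, hτ, hle⟩ := h.exists_label_ge ha hmem
    exact (hab.trans_le (by simpa using hle)).not_gt (hlt τ hτ)

lemma nodup_map_snd (h : IsKPath k u l) (hc : (pathLabels u l).IsChain (· < ·)) :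
    (l.map Prod.snd).Nodup := by
  induction l generalizing u with
  | nil => simp
  | cons q l ih =>
    obtain ⟨-, hb, hab, h⟩ := h
    have hgt : ∀ τ ∈ pathLabels (u * swap q.1 q.2) l, u q.1 < τ :=
      (List.pairwise_cons.1 (List.isChain_iff_pairwise.1 hc)).1
    refine List.nodup_cons.2 ⟨fun hmem => ?_, ih h hc.tail⟩
    obtain ⟨τ, hτ, hlt⟩ := h.exists_label_lt hb hmem
    exact (hgt τ hτ).not_gt (by simpa using hlt)

lemma mem_map_fst_iff (h : IsKPath k u l) :
    i ∈ l.map Prod.fst ↔ i.val < k ∧ u i ≠ pathEnd u l i := by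
  constructor
  · intro hmem
    obtain ⟨p, hp, rfl⟩ := List.mem_map.1 hmem
    exact ⟨h.fst_lt p hp, (h.apply_lt_pathEnd_apply (h.fst_lt p hp) hmem).ne⟩
  · rintro ⟨hi, hne⟩
    by_contra hmem
    refine hne (pathEnd_apply_of_forall_ne u fun p hp => ⟨?_, ?_⟩).symm
    · rintro rfl; exact hmem (List.mem_map_of_mem hp)
    · rintro rfl; exact (h.le_snd p hp).not_gt hi

lemma mem_map_snd_iff (h : IsKPath k u l) :
    i ∈ l.map Prod.snd ↔ k ≤ i.val ∧ u i ≠ pathEnd u l i := by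
  constructor
  · intro hmem
    obtain ⟨p, hp, rfl⟩ := List.mem_map.1 hmem
    exact ⟨h.le_snd p hp, (h.pathEnd_apply_lt_apply (h.le_snd p hp) hmem).ne'⟩
  · rintro ⟨hi, hne⟩
    by_contra hmem
    refine hne (pathEnd_apply_of_forall_ne u fun p hp => ⟨?_, ?_⟩).symm
    · rintro rfl; exact (h.fst_lt p hp).not_ge hi
    · rintro rfl; exact hmem (List.mem_map_of_mem hp)

lemma length_eq_card_of_decreasing (h : IsKPath k u l)
    (hc : (pathLabels u l).IsChain (· > ·)) :
    l.length = (Finset.univ.filter fun i : Fin n => i.val < k ∧ u i ≠ pathEnd u l i).card := by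
  rw [← List.length_map Prod.fst, ← List.toFinset_card_of_nodup (h.nodup_map_fst hc)]
  congr 1
  ext i
  simp [h.mem_map_fst_iff]

lemma length_eq_card_of_increasing (h : IsKPath k u l)
    (hc : (pathLabels u l).IsChain (· < ·)) :
    l.length = (Finset.univ.filter fun i : Fin n => k ≤ i.val ∧ u i ≠ pathEnd u l i).card := by
  rw [← List.length_map Prod.snd, ← List.toFinset_card_of_nodup (h.nodup_map_snd hc)]
  congr 1
  ext i
  simp [h.mem_map_snd_iff]

end IsKPath

/-- A decreasing path from `u` to `w` in the extended `k`-Bruhat order has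
length `#([k] ∩ M(u⁻¹w))`; an increasing one has length `#({k+1,…,n} ∩ M(u⁻¹w))`. -/
theorem stmt11 (n k : ℕ) (u w : Equiv.Perm (Fin n))
    (l : List (Fin n × Fin n)) (hpath : IsKPath k u l) (hend : pathEnd u l = w) :
    (List.Chain' (· > ·) (pathLabels u l) →
        l.length = (Finset.univ.filter fun i : Fin n => i.val < k ∧ u i ≠ w i).card) ∧
      (List.Chain' (· < ·) (pathLabels u l) →
        l.length = (Finset.univ.filter fun i : Fin n => k ≤ i.val ∧ u i ≠ w i).card) := by
  subst hend
  exact ⟨hpath.length_eq_card_of_decreasing, hpath.length_eq_card_of_increasing⟩
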